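/- Single-letterization inequality: for random variables (W, X^n, S^n, Y^n) with S^n i.i.d., S^n independent of W, and (W, Y^{i−1}, {S_l}_{l≠i}) − (X_i, S_i) − Y_i a Markov chain for each i (memoryless channel), it holds that I(W; Y^n | S^n) ≤ Σ_{i=1}^n I(X_i; Y_i | S_i). -/

import Mathlib

open Finset

/-- Conditional mutual information `I(A;B|C)` of a joint pmf `μ` on finite types. -/
noncomputable def cmi3 {A B C : Type} [Fintype A] [Fintype B] [Fintype C]
    (μ : A → B → C → ℝ) : ℝ :=
  ∑ a, ∑ b, ∑ c, μ a b c *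
    Real.log ((μ a b c * (∑ a', ∑ b', μ a' b' c)) /
      ((∑ b', μ a b' c) * (∑ a', μ a' b c)))

namespace SLAux

/-- Gibbs' inequality (unnormalized). -/
lemma gibbs {ι : Type*} [Fintype ι] (p q : ι → ℝ) (hp : ∀ i, 0 ≤ p i)
    (hq : ∀ i, 0 ≤ q i) (hpq : ∀ i, 0 < p i → 0 < q i) (h : ∑ i, q i ≤ ∑ i, p i) :
    ∑ i, p i * (Real.log (q i) - Real.log (p i)) ≤ 0 := by
  have key : ∀ i : ι, p i * (Real.log (q i) - Real.log (p i)) ≤ q i - p i := by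
    intro i
    rcases eq_or_lt_of_le (hp i) with h0 | h0
    · simpa [← h0] using hq i
    · have hqi := hpq i h0
      rw [← Real.log_div hqi.ne' h0.ne']
      calc p i * Real.log (q i / p i) ≤ p i * (q i / p i - 1) :=
            mul_le_mul_of_nonneg_left (Real.log_le_sub_one_of_pos (div_pos hqi h0)) h0.le
        _ = q i - p i := by field_simp
  calc ∑ i, p i * (Real.log (q i) - Real.log (p i)) ≤ ∑ i, (q i - p i) :=
        Finset.sum_le_sum fun i _ => key i
    _ = (∑ i, q i) - ∑ i, p i := by rw [Finset.sum_sub_distrib]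
    _ ≤ 0 := by linarith

lemma mul_log_ratio {p x y z u : ℝ} (hp : 0 ≤ p)
    (h : 0 < p → 0 < x ∧ 0 < y ∧ 0 < z ∧ 0 < u) :
    p * Real.log (x * y / (z * u)) = p * (Real.log x + Real.log y - Real.log z - Real.log u) := by
  rcases eq_or_lt_of_le hp with h0 | h0
  · simp [← h0]
  · obtain ⟨hx, hy, hz, hu⟩ := h h0
    rw [Real.log_div (by positivity) (by positivity), Real.log_mul hx.ne' hy.ne',
      Real.log_mul hz.ne' hu.ne']
    ring

lemma mul_log_ratio3 {p x y z : ℝ} (hp : 0 ≤ p) (h : 0 < p → 0 < x ∧ 0 < y ∧ 0 < z) :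
    p * (Real.log (x * y / z) - Real.log p) =
      p * (Real.log x + Real.log y - Real.log z - Real.log p) := by
  rcases eq_or_lt_of_le hp with h0 | h0
  · simp [← h0]
  · obtain ⟨hx, hy, hz⟩ := h h0
    rw [Real.log_div (by positivity) hz.ne', Real.log_mul hx.ne' hy.ne']

section fw

variable {Ω : Type} [Fintype Ω] (m : Ω → ℝ)

/-- fiber weight of `m` along `φ`. -/
noncomputable def fw {C : Type} [DecidableEq C] (φ : Ω → C) (c : C) : ℝ :=
  ∑ ω, if φ ω = c then m ω else 0

variable {C D : Type} [DecidableEq C] [DecidableEq D]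

lemma fw_nonneg (hm : ∀ ω, 0 ≤ m ω) (φ : Ω → C) (c : C) : 0 ≤ fw m φ c :=
  Finset.sum_nonneg fun ω _ => by split <;> simp [hm ω]

lemma le_fw (hm : ∀ ω, 0 ≤ m ω) (φ : Ω → C) (ω₀ : Ω) : m ω₀ ≤ fw m φ (φ ω₀) := by
  have := Finset.single_le_sum (f := fun ω => if φ ω = φ ω₀ then m ω else 0)
    (fun ω _ => by split <;> simp [hm ω]) (Finset.mem_univ ω₀)
  simpa [fw] using this

lemma fw_pos_elim {C : Type} [DecidableEq C] {φ : Ω → C} {c : C}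
    (hm : ∀ ω, 0 ≤ m ω) (h : 0 < fw m φ c) : ∃ ω, φ ω = c ∧ 0 < m ω := by
  by_contra hc
  push_neg at hc
  have hle : fw m φ c ≤ 0 := Finset.sum_nonpos fun ω _ => by
    by_cases hφ : φ ω = c
    · simpa [hφ] using hc ω hφ
    · simp [hφ]
  linarith

lemma fw_congr {φ : Ω → C} {ψ : Ω → D} {c : C} {d : D}
    (h : ∀ ω, φ ω = c ↔ ψ ω = d) : fw m φ c = fw m ψ d :=
  Finset.sum_congr rfl fun ω _ => by rw [if_congr (h ω) rfl rfl]

lemma sum_fw [Fintype C] (φ : Ω → C) : ∑ c, fw m φ c = ∑ ω, m ω := by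
  simp only [fw]
  rw [Finset.sum_comm]
  exact Finset.sum_congr rfl fun ω _ => by simp

lemma sum_fw_mul [Fintype C] (φ : Ω → C) (g : C → ℝ) :
    ∑ c, fw m φ c * g c = ∑ ω, m ω * g (φ ω) := by
  simp only [fw, Finset.sum_mul]
  rw [Finset.sum_comm]
  refine Finset.sum_congr rfl fun ω _ => ?_
  simp

/-- marginalize out the second coordinate of a pair map. -/
lemma fw_sum_snd {B : Type} [Fintype B] [DecidableEq B] (φ : Ω → C) (ψ : Ω → B) (c : C) :
    ∑ b, fw m (fun ω => (φ ω, ψ ω)) (c, b) = fw m φ c := by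
  simp only [fw]
  rw [Finset.sum_comm]
  refine Finset.sum_congr rfl fun ω _ => ?_
  by_cases h : φ ω = c <;> simp [Prod.ext_iff, h]

/-- marginalize out the first coordinate of a pair map. -/
lemma fw_sum_fst {B : Type} [Fintype B] [DecidableEq B] (φ : Ω → B) (ψ : Ω → C) (c : C) :
    ∑ b, fw m (fun ω => (φ ω, ψ ω)) (b, c) = fw m ψ c := by
  simp only [fw]
  rw [Finset.sum_comm]
  refine Finset.sum_congr rfl fun ω _ => ?_
  by_cases h : ψ ω = c <;> simp [Prod.ext_iff, h]

/-- marginalize out the middle coordinate of a `((·,·),·)` map. -/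
lemma fw_sum_mid {A B : Type} [Fintype A] [DecidableEq A] [Fintype B] [DecidableEq B]
    (φ : Ω → C) (χ : Ω → A) (ψ : Ω → B) (c : C) (b : B) :
    ∑ a, fw m (fun ω => ((φ ω, χ ω), ψ ω)) ((c, a), b) =
      fw m (fun ω => (φ ω, ψ ω)) (c, b) := by
  simp only [fw]
  rw [Finset.sum_comm]
  refine Finset.sum_congr rfl fun ω _ => ?_
  by_cases h1 : φ ω = c <;> by_cases h2 : ψ ω = b <;> simp [Prod.ext_iff, h1, h2]

end fw

end SLAux

namespace SLAux2
open SLAux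

section ecut
variable {n : ℕ} {𝒴 : Type}

/-- cut off a tuple after the first `i` coordinates, replacing the rest by `y₀`. -/
def ecut (y₀ : 𝒴) (i : ℕ) (y : Fin n → 𝒴) : Fin n → 𝒴 := fun j => if (j : ℕ) < i then y j else y₀

lemma ecut_eq_iff (y₀ : 𝒴) (i : ℕ) (y' y : Fin n → 𝒴) :
    ecut y₀ i y' = ecut y₀ i y ↔ ∀ j : Fin n, (j : ℕ) < i → y' j = y j := by
  constructor
  · intro h j hj
    have := congrFun h j
    simpa [ecut, hj] using this
  · intro h
    funext j
    by_cases hj : (j : ℕ) < i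
    · simp [ecut, hj, h j hj]
    · simp [ecut, hj]

lemma ecut_self (y₀ : 𝒴) (y : Fin n → 𝒴) : ecut y₀ n y = y := by
  funext j; simp [ecut, j.isLt]

lemma ecut_zero (y₀ : 𝒴) (y : Fin n → 𝒴) : ecut y₀ 0 y = fun _ => y₀ := by
  funext j; simp [ecut]

lemma ecut_succ_eq_iff (y₀ : 𝒴) (i : Fin n) (y' y : Fin n → 𝒴) :
    ecut y₀ ((i : ℕ) + 1) y' = ecut y₀ ((i : ℕ) + 1) y ↔
      (ecut y₀ i y' = ecut y₀ i y ∧ y' i = y i) := by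
  rw [ecut_eq_iff, ecut_eq_iff]
  constructor
  · intro h
    refine ⟨fun j hj => h j (by omega), h i (by omega)⟩
  · rintro ⟨h1, h2⟩ j hj
    rcases Nat.lt_succ_iff_lt_or_eq.mp hj with hj' | hj'
    · exact h1 j hj'
    · have : j = i := Fin.ext hj'
      rw [this]; exact h2

end ecut

section fw2
variable {Ω : Type} [Fintype Ω] (m : Ω → ℝ)

/-- marginalize out the first coordinate of the inner pair of a `((·,·),·)` map. -/
lemma fw_sum_fst3 {A B C : Type} [Fintype A] [DecidableEq A] [Fintype B] [DecidableEq B]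
    [DecidableEq C]
    (χ : Ω → A) (φ : Ω → C) (ψ : Ω → B) (c : C) (b : B) :
    ∑ a, fw m (fun ω => ((χ ω, φ ω), ψ ω)) ((a, c), b) =
      fw m (fun ω => (φ ω, ψ ω)) (c, b) := by
  simp only [fw]
  rw [Finset.sum_comm]
  refine Finset.sum_congr rfl fun ω _ => ?_
  by_cases h1 : φ ω = c <;> by_cases h2 : ψ ω = b <;> simp [Prod.ext_iff, h1, h2]

lemma collapse_ws {W X S Y : Type} [Fintype W] [Fintype X] [Fintype S] [Fintype Y]
    [DecidableEq W] [DecidableEq S]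
    (μ : W → X → S → Y → ℝ) (w : W) (s : S)
    (P : X → Y → Prop) [∀ x y, Decidable (P x y)] :
    (∑ ω : W × X × S × Y, if ω.1 = w ∧ ω.2.2.1 = s ∧ P ω.2.1 ω.2.2.2
        then μ ω.1 ω.2.1 ω.2.2.1 ω.2.2.2 else 0)
      = ∑ x, ∑ y, if P x y then μ w x s y else 0 := by
  simp only [Fintype.sum_prod_type, ite_and, Finset.sum_ite_irrel, Finset.sum_const_zero,
    Finset.sum_ite_eq', Finset.mem_univ, if_true]

end fw2
end SLAux2

namespace SL
open SLAux SLAux2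

variable {n : ℕ} {𝒲 𝒳 𝒮 𝒴 : Type} [Fintype 𝒲] [Fintype 𝒳] [Fintype 𝒮] [Fintype 𝒴]
  [DecidableEq 𝒲] [DecidableEq 𝒳] [DecidableEq 𝒮] [DecidableEq 𝒴]

/-- full sample space -/
abbrev Om (n : ℕ) (𝒲 𝒳 𝒮 𝒴 : Type) : Type := 𝒲 × (Fin n → 𝒳) × (Fin n → 𝒮) × (Fin n → 𝒴)

local instance : DecidableEq (𝒲 × (Fin n → 𝒮) × (Fin n → 𝒴)) := instDecidableEqProd
local instance : DecidableEq ((𝒲 × (Fin n → 𝒮) × (Fin n → 𝒴)) × 𝒳) := instDecidableEqProd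
local instance : DecidableEq (((𝒲 × (Fin n → 𝒮) × (Fin n → 𝒴)) × 𝒳) × 𝒴) := instDecidableEqProd

variable (μ : 𝒲 → (Fin n → 𝒳) → (Fin n → 𝒮) → (Fin n → 𝒴) → ℝ) (y₀ : 𝒴)

def m : Om n 𝒲 𝒳 𝒮 𝒴 → ℝ := fun ω => μ ω.1 ω.2.1 ω.2.2.1 ω.2.2.2

/-- prefix map `(w, s, y^{<k})`. -/
def Phi (k : ℕ) : Om n 𝒲 𝒳 𝒮 𝒴 → 𝒲 × (Fin n → 𝒮) × (Fin n → 𝒴) :=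
  fun ω => (ω.1, ω.2.2.1, ecut y₀ k ω.2.2.2)

noncomputable def gg (k : ℕ) : Om n 𝒲 𝒳 𝒮 𝒴 → ℝ :=
  fun ω => fw (m μ) (Phi y₀ k) (Phi y₀ k ω)

lemma gg_def (k : ℕ) (ω : Om n 𝒲 𝒳 𝒮 𝒴) :
    gg μ y₀ k ω = fw (m μ) (Phi y₀ k) (Phi y₀ k ω) := rfl

noncomputable def PT := fw (m μ) (fun ω : Om n 𝒲 𝒳 𝒮 𝒴 => ((ω.1, ω.2.2.1), ω.2.2.2))
noncomputable def PWS := fw (m μ) (fun ω : Om n 𝒲 𝒳 𝒮 𝒴 => (ω.1, ω.2.2.1))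
noncomputable def PSm := fw (m μ) (fun ω : Om n 𝒲 𝒳 𝒮 𝒴 => ω.2.2.1)
noncomputable def PSY := fw (m μ) (fun ω : Om n 𝒲 𝒳 𝒮 𝒴 => (ω.2.2.1, ω.2.2.2))
noncomputable def QYS (i : Fin n) := fw (m μ) (fun ω : Om n 𝒲 𝒳 𝒮 𝒴 => (ω.2.2.1 i, ω.2.2.2 i))
noncomputable def QS (i : Fin n) := fw (m μ) (fun ω : Om n 𝒲 𝒳 𝒮 𝒴 => ω.2.2.1 i)
noncomputable def Rf (i : Fin n) :=
  fw (m μ) (fun ω : Om n 𝒲 𝒳 𝒮 𝒴 => ((ω.2.1 i, ω.2.2.1 i), ω.2.2.2 i))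
noncomputable def Rx (i : Fin n) := fw (m μ) (fun ω : Om n 𝒲 𝒳 𝒮 𝒴 => (ω.2.1 i, ω.2.2.1 i))
noncomputable def Wf (i : Fin n) :=
  fw (m μ) (fun ω : Om n 𝒲 𝒳 𝒮 𝒴 => ((Phi y₀ i ω, ω.2.1 i), ω.2.2.2 i))
noncomputable def Wx (i : Fin n) :=
  fw (m μ) (fun ω : Om n 𝒲 𝒳 𝒮 𝒴 => (Phi y₀ i ω, ω.2.1 i))
noncomputable def Wy (i : Fin n) :=
  fw (m μ) (fun ω : Om n 𝒲 𝒳 𝒮 𝒴 => (Phi y₀ i ω, ω.2.2.2 i))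

/-- the pmf value of the `(W,S,Y)` marginal. -/
lemma PT_eq (w : 𝒲) (s : Fin n → 𝒮) (y : Fin n → 𝒴) :
    PT μ ((w, s), y) = ∑ x, μ w x s y := by
  have h : PT μ ((w, s), y) =
      ∑ ω : Om n 𝒲 𝒳 𝒮 𝒴, if ω.1 = w ∧ ω.2.2.1 = s ∧ ω.2.2.2 = y
        then μ ω.1 ω.2.1 ω.2.2.1 ω.2.2.2 else 0 := by
    refine Finset.sum_congr rfl fun ω _ => if_congr ?_ rfl rfl
    simp only [Prod.ext_iff]
    tauto
  rw [h, collapse_ws μ w s (fun _ y' => y' = y)]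
  simp

set_option linter.unusedSectionVars false

lemma Rf_eq (i : Fin n) (a : 𝒳) (b : 𝒴) (c : 𝒮) :
    Rf μ i ((a, c), b) =
      ∑ w, ∑ x, ∑ s, ∑ y, if x i = a ∧ y i = b ∧ s i = c then μ w x s y else 0 := by
  simp only [Rf, fw, m, Fintype.sum_prod_type]
  refine Finset.sum_congr rfl fun w _ => Finset.sum_congr rfl fun x _ =>
    Finset.sum_congr rfl fun s _ => Finset.sum_congr rfl fun y _ => if_congr ?_ rfl rfl
  simp only [Prod.ext_iff]
  try tauto

lemma Rx_eq (i : Fin n) (a : 𝒳) (c : 𝒮) :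
    Rx μ i (a, c) = ∑ w, ∑ x, ∑ s, ∑ y, if x i = a ∧ s i = c then μ w x s y else 0 := by
  simp only [Rx, fw, m, Fintype.sum_prod_type]
  refine Finset.sum_congr rfl fun w _ => Finset.sum_congr rfl fun x _ =>
    Finset.sum_congr rfl fun s _ => Finset.sum_congr rfl fun y _ => if_congr ?_ rfl rfl
  simp only [Prod.ext_iff]
  try tauto

lemma Wf_eq (i : Fin n) (ω : Om n 𝒲 𝒳 𝒮 𝒴) :
    Wf μ y₀ i ((Phi y₀ i ω, ω.2.1 i), ω.2.2.2 i) =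
      ∑ x, ∑ y, if x i = ω.2.1 i ∧ y i = ω.2.2.2 i ∧
          (∀ j : Fin n, (j : ℕ) < (i : ℕ) → y j = ω.2.2.2 j) then μ ω.1 x ω.2.2.1 y else 0 := by
  have h : Wf μ y₀ i ((Phi y₀ i ω, ω.2.1 i), ω.2.2.2 i) =
      ∑ ω' : Om n 𝒲 𝒳 𝒮 𝒴, if ω'.1 = ω.1 ∧ ω'.2.2.1 = ω.2.2.1 ∧
          (ω'.2.1 i = ω.2.1 i ∧ ω'.2.2.2 i = ω.2.2.2 i ∧
            ∀ j : Fin n, (j : ℕ) < (i : ℕ) → ω'.2.2.2 j = ω.2.2.2 j)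
        then μ ω'.1 ω'.2.1 ω'.2.2.1 ω'.2.2.2 else 0 := by
    refine Finset.sum_congr rfl fun ω' _ => if_congr ?_ rfl rfl
    simp only [Phi, Prod.ext_iff, ecut_eq_iff]
    try tauto
  rw [h, collapse_ws μ ω.1 ω.2.2.1 (fun x' y' => x' i = ω.2.1 i ∧ y' i = ω.2.2.2 i ∧
    ∀ j : Fin n, (j : ℕ) < (i : ℕ) → y' j = ω.2.2.2 j)]

lemma Wx_eq (i : Fin n) (ω : Om n 𝒲 𝒳 𝒮 𝒴) :
    Wx μ y₀ i (Phi y₀ i ω, ω.2.1 i) =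
      ∑ x, ∑ y, if x i = ω.2.1 i ∧
          (∀ j : Fin n, (j : ℕ) < (i : ℕ) → y j = ω.2.2.2 j) then μ ω.1 x ω.2.2.1 y else 0 := by
  have h : Wx μ y₀ i (Phi y₀ i ω, ω.2.1 i) =
      ∑ ω' : Om n 𝒲 𝒳 𝒮 𝒴, if ω'.1 = ω.1 ∧ ω'.2.2.1 = ω.2.2.1 ∧
          (ω'.2.1 i = ω.2.1 i ∧
            ∀ j : Fin n, (j : ℕ) < (i : ℕ) → ω'.2.2.2 j = ω.2.2.2 j)
        then μ ω'.1 ω'.2.1 ω'.2.2.1 ω'.2.2.2 else 0 := by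
    refine Finset.sum_congr rfl fun ω' _ => if_congr ?_ rfl rfl
    simp only [Phi, Prod.ext_iff, ecut_eq_iff]
    try tauto
  rw [h, collapse_ws μ ω.1 ω.2.2.1 (fun x' y' => x' i = ω.2.1 i ∧
    ∀ j : Fin n, (j : ℕ) < (i : ℕ) → y' j = ω.2.2.2 j)]

lemma gg_top (ω : Om n 𝒲 𝒳 𝒮 𝒴) : gg μ y₀ n ω = PT μ ((ω.1, ω.2.2.1), ω.2.2.2) := by
  refine fw_congr _ fun ω' => ?_
  simp only [Phi, Prod.ext_iff, ecut_self]
  tauto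

lemma gg_bot (ω : Om n 𝒲 𝒳 𝒮 𝒴) : gg μ y₀ 0 ω = PWS μ (ω.1, ω.2.2.1) := by
  refine fw_congr _ fun ω' => ?_
  simp only [Phi, Prod.ext_iff, ecut_zero]
  tauto

lemma gg_succ (i : Fin n) (ω : Om n 𝒲 𝒳 𝒮 𝒴) :
    gg μ y₀ ((i : ℕ) + 1) ω = Wy μ y₀ i (Phi y₀ i ω, ω.2.2.2 i) := by
  refine fw_congr _ fun ω' => ?_
  simp only [Phi, Prod.ext_iff, ecut_succ_eq_iff y₀ i]
  constructor
  · rintro ⟨h1, h2, h3⟩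
    exact ⟨⟨h1, h2, h3.1⟩, h3.2⟩
  · rintro ⟨⟨h1, h2, h3⟩, h4⟩
    exact ⟨h1, h2, h3, h4⟩

lemma sum_PT_y (w : 𝒲) (s : Fin n → 𝒮) : ∑ y, PT μ ((w, s), y) = PWS μ (w, s) :=
  fw_sum_snd _ _ _ _

lemma sum_PT_w (s : Fin n → 𝒮) (y : Fin n → 𝒴) : ∑ w, PT μ ((w, s), y) = PSY μ (s, y) :=
  fw_sum_fst3 _ _ _ _ _ _

lemma sum_PSY_y (s : Fin n → 𝒮) : ∑ y, PSY μ (s, y) = PSm μ s := fw_sum_snd _ _ _ _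

lemma sum_QYS (i : Fin n) (c : 𝒮) : ∑ b, QYS μ i (c, b) = QS μ i c := fw_sum_snd _ _ _ _

lemma sum_Rf_b (i : Fin n) (a : 𝒳) (c : 𝒮) : ∑ b, Rf μ i ((a, c), b) = Rx μ i (a, c) :=
  fw_sum_snd _ _ _ _

lemma sum_Rf_a (i : Fin n) (b : 𝒴) (c : 𝒮) : ∑ a, Rf μ i ((a, c), b) = QYS μ i (c, b) :=
  fw_sum_fst3 _ _ _ _ _ _

lemma sum_Rx_a (i : Fin n) (c : 𝒮) : ∑ a, Rx μ i (a, c) = QS μ i c := fw_sum_fst _ _ _ _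

lemma sum_Wf_b (i : Fin n) (u : 𝒲 × (Fin n → 𝒮) × (Fin n → 𝒴)) (a : 𝒳) :
    ∑ b, Wf μ y₀ i ((u, a), b) = Wx μ y₀ i (u, a) := by
  unfold Wf Wx
  exact fw_sum_snd (m μ) (fun ω => (Phi y₀ i ω, ω.2.1 i)) (fun ω => ω.2.2.2 i) (u, a)

lemma sum_Wf_a (i : Fin n) (u : 𝒲 × (Fin n → 𝒮) × (Fin n → 𝒴)) (b : 𝒴) :
    ∑ a, Wf μ y₀ i ((u, a), b) = Wy μ y₀ i (u, b) := by
  unfold Wf Wy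
  exact fw_sum_mid (m μ) (Phi y₀ i) (fun ω => ω.2.1 i) (fun ω => ω.2.2.2 i) u b

lemma sum_Wx_a (i : Fin n) (u : 𝒲 × (Fin n → 𝒮) × (Fin n → 𝒴)) :
    ∑ a, Wx μ y₀ i (u, a) = fw (m μ) (Phi y₀ i) u := by
  unfold Wx
  exact fw_sum_snd (m μ) (Phi y₀ i) (fun ω => ω.2.1 i) u

lemma sum_Wy_b (i : Fin n) (u : 𝒲 × (Fin n → 𝒮) × (Fin n → 𝒴)) :
    ∑ b, Wy μ y₀ i (u, b) = fw (m μ) (Phi y₀ i) u := by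
  unfold Wy
  exact fw_sum_snd (m μ) (Phi y₀ i) (fun ω => ω.2.2.2 i) u


lemma sum_PWS_w (s : Fin n → 𝒮) : ∑ w, PWS μ (w, s) = PSm μ s := fw_sum_fst _ _ _ _

section expand
variable (hμ0 : ∀ w x s y, 0 ≤ μ w x s y)

include hμ0

lemma m_nonneg : ∀ ω : Om n 𝒲 𝒳 𝒮 𝒴, 0 ≤ m μ ω := fun ω => hμ0 _ _ _ _

lemma PT_nonneg (c : (𝒲 × (Fin n → 𝒮)) × (Fin n → 𝒴)) : 0 ≤ PT μ c :=
  fw_nonneg _ (m_nonneg μ hμ0) _ _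

lemma PSY_nonneg (c : (Fin n → 𝒮) × (Fin n → 𝒴)) : 0 ≤ PSY μ c :=
  fw_nonneg _ (m_nonneg μ hμ0) _ _

lemma PWS_nonneg (c : 𝒲 × (Fin n → 𝒮)) : 0 ≤ PWS μ c :=
  fw_nonneg _ (m_nonneg μ hμ0) _ _

lemma PT_le_PWS (w : 𝒲) (s : Fin n → 𝒮) (y : Fin n → 𝒴) :
    PT μ ((w, s), y) ≤ PWS μ (w, s) := by
  rw [← sum_PT_y]
  exact Finset.single_le_sum (f := fun b => PT μ ((w, s), b))
    (fun b _ => PT_nonneg μ hμ0 _) (Finset.mem_univ y)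

lemma PT_le_PSY (w : 𝒲) (s : Fin n → 𝒮) (y : Fin n → 𝒴) :
    PT μ ((w, s), y) ≤ PSY μ (s, y) := by
  rw [← sum_PT_w]
  exact Finset.single_le_sum (f := fun b => PT μ ((b, s), y))
    (fun b _ => PT_nonneg μ hμ0 _) (Finset.mem_univ w)

lemma PSY_le_PSm (s : Fin n → 𝒮) (y : Fin n → 𝒴) : PSY μ (s, y) ≤ PSm μ s := by
  rw [← sum_PSY_y]
  exact Finset.single_le_sum (f := fun b => PSY μ (s, b))
    (fun b _ => PSY_nonneg μ hμ0 _) (Finset.mem_univ y)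

lemma lhs_expand :
    cmi3 (fun w y s => ∑ x, μ w x s y) =
      ∑ ω : Om n 𝒲 𝒳 𝒮 𝒴, m μ ω *
        (Real.log (PT μ ((ω.1, ω.2.2.1), ω.2.2.2)) + Real.log (PSm μ ω.2.2.1)
          - Real.log (PWS μ (ω.1, ω.2.2.1)) - Real.log (PSY μ (ω.2.2.1, ω.2.2.2))) := by
  have reorder : ∀ F : ((𝒲 × (Fin n → 𝒮)) × (Fin n → 𝒴)) → ℝ,
      ∑ c, F c = ∑ w, ∑ y, ∑ s, F ((w, s), y) := by
    intro F
    rw [Fintype.sum_prod_type, Fintype.sum_prod_type]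
    exact Finset.sum_congr rfl fun w _ => Finset.sum_comm
  have key : cmi3 (fun w y s => ∑ x, μ w x s y) =
      ∑ c : (𝒲 × (Fin n → 𝒮)) × (Fin n → 𝒴), PT μ c *
        (Real.log (PT μ c) + Real.log (PSm μ c.1.2)
          - Real.log (PWS μ c.1) - Real.log (PSY μ (c.1.2, c.2))) := by
    rw [reorder]
    unfold cmi3
    refine Finset.sum_congr rfl fun w _ => Finset.sum_congr rfl fun y _ =>
      Finset.sum_congr rfl fun s _ => ?_
    simp only [← PT_eq]
    rw [sum_PT_y, sum_PT_w, show (∑ a', ∑ b', PT μ ((a', s), b')) = PSm μ s by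
      rw [← sum_PWS_w]
      exact Finset.sum_congr rfl fun a _ => sum_PT_y μ a s]
    have hmono := PT_le_PWS μ hμ0 w s y
    have hmono2 := PT_le_PSY μ hμ0 w s y
    have hmono3 := PSY_le_PSm μ hμ0 s y
    have := mul_log_ratio (p := PT μ ((w, s), y)) (x := PT μ ((w, s), y)) (y := PSm μ s)
      (z := PWS μ (w, s)) (u := PSY μ (s, y)) (PT_nonneg μ hμ0 _)
      (fun hpos => ⟨hpos, lt_of_lt_of_le (lt_of_lt_of_le hpos hmono2) hmono3,
        lt_of_lt_of_le hpos hmono, lt_of_lt_of_le hpos hmono2⟩)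
    exact this
  rw [key]
  exact sum_fw_mul (m μ) (fun ω : Om n 𝒲 𝒳 𝒮 𝒴 => ((ω.1, ω.2.2.1), ω.2.2.2))
    (fun c => Real.log (PT μ c) + Real.log (PSm μ c.1.2)
      - Real.log (PWS μ c.1) - Real.log (PSY μ (c.1.2, c.2)))


lemma Rf_nonneg (i : Fin n) (c : (𝒳 × 𝒮) × 𝒴) : 0 ≤ Rf μ i c :=
  fw_nonneg _ (m_nonneg μ hμ0) _ _

lemma QYS_nonneg (i : Fin n) (c : 𝒮 × 𝒴) : 0 ≤ QYS μ i c :=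
  fw_nonneg _ (m_nonneg μ hμ0) _ _

lemma Rf_le_Rx (i : Fin n) (a : 𝒳) (b : 𝒴) (c : 𝒮) : Rf μ i ((a, c), b) ≤ Rx μ i (a, c) := by
  rw [← sum_Rf_b]
  exact Finset.single_le_sum (f := fun b => Rf μ i ((a, c), b))
    (fun b _ => Rf_nonneg μ hμ0 i _) (Finset.mem_univ b)

lemma Rf_le_QYS (i : Fin n) (a : 𝒳) (b : 𝒴) (c : 𝒮) : Rf μ i ((a, c), b) ≤ QYS μ i (c, b) := by
  rw [← sum_Rf_a]
  exact Finset.single_le_sum (f := fun a => Rf μ i ((a, c), b))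
    (fun a _ => Rf_nonneg μ hμ0 i _) (Finset.mem_univ a)

lemma QYS_le_QS (i : Fin n) (b : 𝒴) (c : 𝒮) : QYS μ i (c, b) ≤ QS μ i c := by
  rw [← sum_QYS]
  exact Finset.single_le_sum (f := fun b => QYS μ i (c, b))
    (fun b _ => QYS_nonneg μ hμ0 i _) (Finset.mem_univ b)

lemma rhs_expand (i : Fin n) :
    cmi3 (fun (xi : 𝒳) (yi : 𝒴) (si : 𝒮) =>
        ∑ w, ∑ x, ∑ s, ∑ y, if x i = xi ∧ y i = yi ∧ s i = si then μ w x s y else 0) =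
      ∑ ω : Om n 𝒲 𝒳 𝒮 𝒴, m μ ω *
        (Real.log (Rf μ i ((ω.2.1 i, ω.2.2.1 i), ω.2.2.2 i)) + Real.log (QS μ i (ω.2.2.1 i))
          - Real.log (Rx μ i (ω.2.1 i, ω.2.2.1 i))
          - Real.log (QYS μ i (ω.2.2.1 i, ω.2.2.2 i))) := by
  have reorder : ∀ F : ((𝒳 × 𝒮) × 𝒴) → ℝ,
      ∑ c, F c = ∑ a, ∑ b, ∑ c, F ((a, c), b) := by
    intro F
    rw [Fintype.sum_prod_type, Fintype.sum_prod_type]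
    exact Finset.sum_congr rfl fun a _ => Finset.sum_comm
  have key : cmi3 (fun (xi : 𝒳) (yi : 𝒴) (si : 𝒮) =>
        ∑ w, ∑ x, ∑ s, ∑ y, if x i = xi ∧ y i = yi ∧ s i = si then μ w x s y else 0) =
      ∑ c : (𝒳 × 𝒮) × 𝒴, Rf μ i c *
        (Real.log (Rf μ i c) + Real.log (QS μ i c.1.2)
          - Real.log (Rx μ i c.1) - Real.log (QYS μ i (c.1.2, c.2))) := by
    rw [reorder]
    unfold cmi3
    refine Finset.sum_congr rfl fun a _ => Finset.sum_congr rfl fun b _ =>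
      Finset.sum_congr rfl fun c _ => ?_
    simp only [← Rf_eq]
    rw [sum_Rf_b, sum_Rf_a, show (∑ a', ∑ b', Rf μ i ((a', c), b')) = QS μ i c by
      rw [← sum_Rx_a]
      exact Finset.sum_congr rfl fun a' _ => sum_Rf_b μ i a' c]
    have hmono := Rf_le_Rx μ hμ0 i a b c
    have hmono2 := Rf_le_QYS μ hμ0 i a b c
    have hmono3 := QYS_le_QS μ hμ0 i b c
    exact mul_log_ratio (p := Rf μ i ((a, c), b)) (x := Rf μ i ((a, c), b)) (y := QS μ i c)
      (z := Rx μ i (a, c)) (u := QYS μ i (c, b)) (Rf_nonneg μ hμ0 i _)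
      (fun hpos => ⟨hpos, lt_of_lt_of_le (lt_of_lt_of_le hpos hmono2) hmono3,
        lt_of_lt_of_le hpos hmono, lt_of_lt_of_le hpos hmono2⟩)
  rw [key]
  exact sum_fw_mul (m μ) (fun ω : Om n 𝒲 𝒳 𝒮 𝒴 => ((ω.2.1 i, ω.2.2.1 i), ω.2.2.2 i))
    (fun c => Real.log (Rf μ i c) + Real.log (QS μ i c.1.2)
      - Real.log (Rx μ i c.1) - Real.log (QYS μ i (c.1.2, c.2)))

end expand

lemma Rf_eq' (i : Fin n) (a : 𝒳) (b : 𝒴) (c : 𝒮) :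
    Rf μ i ((a, c), b) =
      ∑ w, ∑ x, ∑ s, ∑ y, if x i = a ∧ s i = c ∧ y i = b then μ w x s y else 0 := by
  rw [Rf_eq]
  refine Finset.sum_congr rfl fun w _ => Finset.sum_congr rfl fun x _ =>
    Finset.sum_congr rfl fun s _ => Finset.sum_congr rfl fun y _ => if_congr ?_ rfl rfl
  tauto

lemma telescope (ω : Om n 𝒲 𝒳 𝒮 𝒴) :
    Real.log (PT μ ((ω.1, ω.2.2.1), ω.2.2.2)) - Real.log (PWS μ (ω.1, ω.2.2.1)) =
      ∑ i : Fin n, (Real.log (gg μ y₀ ((i : ℕ) + 1) ω) - Real.log (gg μ y₀ i ω)) := by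
  rw [← gg_top μ y₀ ω, ← gg_bot μ y₀ ω,
    Fin.sum_univ_eq_sum_range (fun k => Real.log (gg μ y₀ (k + 1) ω) - Real.log (gg μ y₀ k ω)) n]
  exact (Finset.sum_range_sub (fun k => Real.log (gg μ y₀ k ω)) n).symm

section stepB
variable (hμ0 : ∀ w x s y, 0 ≤ μ w x s y)
include hμ0

lemma Wf_nonneg (i : Fin n) (c : ((𝒲 × (Fin n → 𝒮) × (Fin n → 𝒴)) × 𝒳) × 𝒴) :
    0 ≤ Wf μ y₀ i c := fw_nonneg _ (m_nonneg μ hμ0) _ _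

lemma Wx_nonneg (i : Fin n) (c : (𝒲 × (Fin n → 𝒮) × (Fin n → 𝒴)) × 𝒳) :
    0 ≤ Wx μ y₀ i c := fw_nonneg _ (m_nonneg μ hμ0) _ _

lemma Wy_nonneg (i : Fin n) (c : (𝒲 × (Fin n → 𝒮) × (Fin n → 𝒴)) × 𝒴) :
    0 ≤ Wy μ y₀ i c := fw_nonneg _ (m_nonneg μ hμ0) _ _

lemma W0_nonneg (k : ℕ) (u : 𝒲 × (Fin n → 𝒮) × (Fin n → 𝒴)) :
    0 ≤ fw (m μ) (Phi (n := n) (𝒳 := 𝒳) y₀ k) u := fw_nonneg _ (m_nonneg μ hμ0) _ _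

lemma Wf_le_Wy (i : Fin n) (u : 𝒲 × (Fin n → 𝒮) × (Fin n → 𝒴)) (a : 𝒳) (b : 𝒴) :
    Wf μ y₀ i ((u, a), b) ≤ Wy μ y₀ i (u, b) := by
  rw [← sum_Wf_a]
  exact Finset.single_le_sum (f := fun a => Wf μ y₀ i ((u, a), b))
    (fun a _ => Wf_nonneg μ y₀ hμ0 i _) (Finset.mem_univ a)

lemma Wf_le_Wx (i : Fin n) (u : 𝒲 × (Fin n → 𝒮) × (Fin n → 𝒴)) (a : 𝒳) (b : 𝒴) :
    Wf μ y₀ i ((u, a), b) ≤ Wx μ y₀ i (u, a) := by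
  rw [← sum_Wf_b]
  exact Finset.single_le_sum (f := fun b => Wf μ y₀ i ((u, a), b))
    (fun b _ => Wf_nonneg μ y₀ hμ0 i _) (Finset.mem_univ b)

lemma Wx_le_W0 (i : Fin n) (u : 𝒲 × (Fin n → 𝒮) × (Fin n → 𝒴)) (a : 𝒳) :
    Wx μ y₀ i (u, a) ≤ fw (m μ) (Phi y₀ i) u := by
  rw [← sum_Wx_a]
  exact Finset.single_le_sum (f := fun a => Wx μ y₀ i (u, a))
    (fun a _ => Wx_nonneg μ y₀ hμ0 i _) (Finset.mem_univ a)

lemma m_le_Wf (i : Fin n) (ω : Om n 𝒲 𝒳 𝒮 𝒴) :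
    m μ ω ≤ Wf μ y₀ i ((Phi y₀ i ω, ω.2.1 i), ω.2.2.2 i) := by
  unfold Wf
  exact le_fw _ (m_nonneg μ hμ0) _ ω

lemma m_le_Wx (i : Fin n) (ω : Om n 𝒲 𝒳 𝒮 𝒴) :
    m μ ω ≤ Wx μ y₀ i (Phi y₀ i ω, ω.2.1 i) := by
  unfold Wx
  exact le_fw _ (m_nonneg μ hμ0) _ ω

lemma m_le_Rf (i : Fin n) (ω : Om n 𝒲 𝒳 𝒮 𝒴) :
    m μ ω ≤ Rf μ i ((ω.2.1 i, ω.2.2.1 i), ω.2.2.2 i) := by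
  unfold Rf
  exact le_fw _ (m_nonneg μ hμ0) _ ω

lemma m_le_Rx (i : Fin n) (ω : Om n 𝒲 𝒳 𝒮 𝒴) :
    m μ ω ≤ Rx μ i (ω.2.1 i, ω.2.2.1 i) := by
  unfold Rx
  exact le_fw _ (m_nonneg μ hμ0) _ ω

lemma markov_pt (i : Fin n)
    (hM : ∀ (w : 𝒲) (s : Fin n → 𝒮) (yp : Fin n → 𝒴) (xi : 𝒳) (yi : 𝒴),
      (∑ x, ∑ y, if x i = xi ∧ y i = yi ∧ (∀ j : Fin n, (j : ℕ) < (i : ℕ) → y j = yp j)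
          then μ w x s y else 0) *
        (∑ w', ∑ x, ∑ s', ∑ y, if x i = xi ∧ s' i = s i then μ w' x s' y else 0) =
      (∑ x, ∑ y, if x i = xi ∧ (∀ j : Fin n, (j : ℕ) < (i : ℕ) → y j = yp j)
          then μ w x s y else 0) *
        (∑ w', ∑ x, ∑ s', ∑ y, if x i = xi ∧ s' i = s i ∧ y i = yi
          then μ w' x s' y else 0))
    (ω : Om n 𝒲 𝒳 𝒮 𝒴) (hω : 0 < m μ ω) :
    Real.log (Wf μ y₀ i ((Phi y₀ i ω, ω.2.1 i), ω.2.2.2 i))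
      - Real.log (Wx μ y₀ i (Phi y₀ i ω, ω.2.1 i))
    = Real.log (Rf μ i ((ω.2.1 i, ω.2.2.1 i), ω.2.2.2 i))
      - Real.log (Rx μ i (ω.2.1 i, ω.2.2.1 i)) := by
  have hm := hM ω.1 ω.2.2.1 ω.2.2.2 (ω.2.1 i) (ω.2.2.2 i)
  rw [← Wf_eq μ y₀ i ω, ← Wx_eq μ y₀ i ω, ← Rf_eq' μ i, ← Rx_eq μ i] at hm
  have h1 : 0 < Wf μ y₀ i ((Phi y₀ i ω, ω.2.1 i), ω.2.2.2 i) :=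
    lt_of_lt_of_le hω (m_le_Wf μ y₀ hμ0 i ω)
  have h2 : 0 < Wx μ y₀ i (Phi y₀ i ω, ω.2.1 i) := lt_of_lt_of_le hω (m_le_Wx μ y₀ hμ0 i ω)
  have h3 : 0 < Rf μ i ((ω.2.1 i, ω.2.2.1 i), ω.2.2.2 i) := lt_of_lt_of_le hω (m_le_Rf μ hμ0 i ω)
  have h4 : 0 < Rx μ i (ω.2.1 i, ω.2.2.1 i) := lt_of_lt_of_le hω (m_le_Rx μ hμ0 i ω)
  have := congrArg Real.log hm
  rw [Real.log_mul h1.ne' h4.ne', Real.log_mul h2.ne' h3.ne'] at this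
  linarith

lemma stepB_core (i : Fin n) :
    ∑ c : ((𝒲 × (Fin n → 𝒮) × (Fin n → 𝒴)) × 𝒳) × 𝒴, Wf μ y₀ i c *
      (Real.log (Wy μ y₀ i (c.1.1, c.2)) + Real.log (Wx μ y₀ i c.1)
        - Real.log (fw (m μ) (Phi y₀ i) c.1.1) - Real.log (Wf μ y₀ i c)) ≤ 0 := by
  rw [Fintype.sum_prod_type, Fintype.sum_prod_type]
  have hu : ∀ u : 𝒲 × (Fin n → 𝒮) × (Fin n → 𝒴),
      ∑ a, ∑ b, Wf μ y₀ i ((u, a), b) *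
        (Real.log (Wy μ y₀ i (u, b)) + Real.log (Wx μ y₀ i (u, a))
          - Real.log (fw (m μ) (Phi y₀ i) u) - Real.log (Wf μ y₀ i ((u, a), b))) ≤ 0 := by
    intro u
    set W0 : ℝ := fw (m μ) (Phi y₀ i) u with hW0def
    have hgibbs := gibbs (ι := 𝒳 × 𝒴) (fun ab => Wf μ y₀ i ((u, ab.1), ab.2))
      (fun ab => Wy μ y₀ i (u, ab.2) * Wx μ y₀ i (u, ab.1) / W0)
      (fun ab => Wf_nonneg μ y₀ hμ0 i _)
      (fun ab => div_nonneg (mul_nonneg (Wy_nonneg μ y₀ hμ0 i _) (Wx_nonneg μ y₀ hμ0 i _))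
        (W0_nonneg μ y₀ hμ0 i u))
      (fun ab hpos => by
        have hy : 0 < Wy μ y₀ i (u, ab.2) := lt_of_lt_of_le hpos (Wf_le_Wy μ y₀ hμ0 i u _ _)
        have hx : 0 < Wx μ y₀ i (u, ab.1) := lt_of_lt_of_le hpos (Wf_le_Wx μ y₀ hμ0 i u _ _)
        have h0 : 0 < W0 := lt_of_lt_of_le hx (Wx_le_W0 μ y₀ hμ0 i u _)
        exact div_pos (mul_pos hy hx) h0)
      ?hsum
    case hsum =>
      have hp : (∑ ab : 𝒳 × 𝒴, Wf μ y₀ i ((u, ab.1), ab.2)) = W0 := by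
        rw [Fintype.sum_prod_type]
        rw [show (∑ a, ∑ b, Wf μ y₀ i ((u, a), b)) = ∑ a, Wx μ y₀ i (u, a) from
          Finset.sum_congr rfl fun a _ => sum_Wf_b μ y₀ i u a]
        exact sum_Wx_a μ y₀ i u
      rw [hp]
      by_cases h0 : W0 = 0
      · have hz : (∑ ab : 𝒳 × 𝒴, Wy μ y₀ i (u, ab.2) * Wx μ y₀ i (u, ab.1) / W0) = 0 := by
          simp [h0]
        rw [hz, h0]
      · have : (∑ ab : 𝒳 × 𝒴, Wy μ y₀ i (u, ab.2) * Wx μ y₀ i (u, ab.1) / W0) = W0 := by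
          rw [Fintype.sum_prod_type]
          have hrow : ∀ a, (∑ b, Wy μ y₀ i (u, b) * Wx μ y₀ i (u, a) / W0)
              = Wx μ y₀ i (u, a) := by
            intro a
            rw [← Finset.sum_div, ← Finset.sum_mul, sum_Wy_b]
            field_simp
            rw [hW0def]; ring
          rw [Finset.sum_congr rfl fun a _ => hrow a]
          exact sum_Wx_a μ y₀ i u
        rw [this]
    -- now rewrite the gibbs sum into the target shape
    rw [Fintype.sum_prod_type] at hgibbs
    refine le_trans (le_of_eq ?_) hgibbs
    refine Finset.sum_congr rfl fun a _ => Finset.sum_congr rfl fun b _ => ?_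
    have := mul_log_ratio3 (p := Wf μ y₀ i ((u, a), b)) (x := Wy μ y₀ i (u, b))
      (y := Wx μ y₀ i (u, a)) (z := W0) (Wf_nonneg μ y₀ hμ0 i _)
      (fun hpos =>
        ⟨lt_of_lt_of_le hpos (Wf_le_Wy μ y₀ hμ0 i u _ _),
         lt_of_lt_of_le hpos (Wf_le_Wx μ y₀ hμ0 i u _ _),
         lt_of_lt_of_le (lt_of_lt_of_le hpos (Wf_le_Wx μ y₀ hμ0 i u _ _))
           (Wx_le_W0 μ y₀ hμ0 i u _)⟩)
    rw [this]
  calc ∑ u, ∑ a, ∑ b, Wf μ y₀ i ((u, a), b) *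
        (Real.log (Wy μ y₀ i (u, b)) + Real.log (Wx μ y₀ i (u, a))
          - Real.log (fw (m μ) (Phi y₀ i) u) - Real.log (Wf μ y₀ i ((u, a), b)))
      ≤ ∑ u : 𝒲 × (Fin n → 𝒮) × (Fin n → 𝒴), (0 : ℝ) :=
        Finset.sum_le_sum fun u _ => hu u
    _ = 0 := by simp


lemma stepB (i : Fin n)
    (hM : ∀ (w : 𝒲) (s : Fin n → 𝒮) (yp : Fin n → 𝒴) (xi : 𝒳) (yi : 𝒴),
      (∑ x, ∑ y, if x i = xi ∧ y i = yi ∧ (∀ j : Fin n, (j : ℕ) < (i : ℕ) → y j = yp j)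
          then μ w x s y else 0) *
        (∑ w', ∑ x, ∑ s', ∑ y, if x i = xi ∧ s' i = s i then μ w' x s' y else 0) =
      (∑ x, ∑ y, if x i = xi ∧ (∀ j : Fin n, (j : ℕ) < (i : ℕ) → y j = yp j)
          then μ w x s y else 0) *
        (∑ w', ∑ x, ∑ s', ∑ y, if x i = xi ∧ s' i = s i ∧ y i = yi
          then μ w' x s' y else 0)) :
    ∑ ω : Om n 𝒲 𝒳 𝒮 𝒴, m μ ω *
        (Real.log (gg μ y₀ ((i : ℕ) + 1) ω) - Real.log (gg μ y₀ i ω)) ≤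
      ∑ ω : Om n 𝒲 𝒳 𝒮 𝒴, m μ ω *
        (Real.log (Rf μ i ((ω.2.1 i, ω.2.2.1 i), ω.2.2.2 i))
          - Real.log (Rx μ i (ω.2.1 i, ω.2.2.1 i))) := by
  have hRW : ∑ ω : Om n 𝒲 𝒳 𝒮 𝒴, m μ ω *
        (Real.log (Rf μ i ((ω.2.1 i, ω.2.2.1 i), ω.2.2.2 i))
          - Real.log (Rx μ i (ω.2.1 i, ω.2.2.1 i))) =
      ∑ ω : Om n 𝒲 𝒳 𝒮 𝒴, m μ ω *
        (Real.log (Wf μ y₀ i ((Phi y₀ i ω, ω.2.1 i), ω.2.2.2 i))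
          - Real.log (Wx μ y₀ i (Phi y₀ i ω, ω.2.1 i))) := by
    refine Finset.sum_congr rfl fun ω _ => ?_
    rcases eq_or_lt_of_le (m_nonneg μ hμ0 ω) with h0 | h0
    · rw [← h0]; ring
    · rw [markov_pt μ y₀ hμ0 i hM ω h0]
  rw [hRW]
  have key : ∑ ω : Om n 𝒲 𝒳 𝒮 𝒴, m μ ω *
      ((Real.log (gg μ y₀ ((i : ℕ) + 1) ω) - Real.log (gg μ y₀ i ω))
        - (Real.log (Wf μ y₀ i ((Phi y₀ i ω, ω.2.1 i), ω.2.2.2 i))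
          - Real.log (Wx μ y₀ i (Phi y₀ i ω, ω.2.1 i)))) ≤ 0 := by
    have hfs : ∑ ω : Om n 𝒲 𝒳 𝒮 𝒴, m μ ω *
        ((Real.log (gg μ y₀ ((i : ℕ) + 1) ω) - Real.log (gg μ y₀ i ω))
          - (Real.log (Wf μ y₀ i ((Phi y₀ i ω, ω.2.1 i), ω.2.2.2 i))
            - Real.log (Wx μ y₀ i (Phi y₀ i ω, ω.2.1 i)))) =
        ∑ c : ((𝒲 × (Fin n → 𝒮) × (Fin n → 𝒴)) × 𝒳) × 𝒴,
          fw (m μ) (fun ω : Om n 𝒲 𝒳 𝒮 𝒴 => ((Phi y₀ i ω, ω.2.1 i), ω.2.2.2 i)) c *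
          (Real.log (Wy μ y₀ i (c.1.1, c.2)) + Real.log (Wx μ y₀ i c.1)
            - Real.log (fw (m μ) (Phi y₀ i) c.1.1)
            - Real.log (fw (m μ)
                (fun ω : Om n 𝒲 𝒳 𝒮 𝒴 => ((Phi y₀ i ω, ω.2.1 i), ω.2.2.2 i)) c)) := by
      rw [sum_fw_mul (m μ) (fun ω : Om n 𝒲 𝒳 𝒮 𝒴 => ((Phi y₀ i ω, ω.2.1 i), ω.2.2.2 i))
        (fun c => Real.log (Wy μ y₀ i (c.1.1, c.2)) + Real.log (Wx μ y₀ i c.1)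
          - Real.log (fw (m μ) (Phi y₀ i) c.1.1)
          - Real.log (fw (m μ)
              (fun ω : Om n 𝒲 𝒳 𝒮 𝒴 => ((Phi y₀ i ω, ω.2.1 i), ω.2.2.2 i)) c))]
      refine Finset.sum_congr rfl fun ω _ => ?_
      dsimp only
      rw [gg_succ μ y₀ i ω, gg_def]
      rw [show Wf μ y₀ i ((Phi y₀ i ω, ω.2.1 i), ω.2.2.2 i) =
          fw (m μ) (fun ω : Om n 𝒲 𝒳 𝒮 𝒴 => ((Phi y₀ i ω, ω.2.1 i), ω.2.2.2 i))
            ((Phi y₀ i ω, ω.2.1 i), ω.2.2.2 i) from rfl]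
      ring
    rw [hfs]
    exact stepB_core μ y₀ hμ0 i
  simp only [mul_sub, Finset.sum_sub_distrib] at key ⊢
  linarith

lemma m_le_PSm (ω : Om n 𝒲 𝒳 𝒮 𝒴) : m μ ω ≤ PSm μ ω.2.2.1 := by
  unfold PSm
  exact le_fw _ (m_nonneg μ hμ0) _ ω

lemma m_le_QYS (i : Fin n) (ω : Om n 𝒲 𝒳 𝒮 𝒴) :
    m μ ω ≤ QYS μ i (ω.2.2.1 i, ω.2.2.2 i) := by
  unfold QYS
  exact le_fw _ (m_nonneg μ hμ0) _ ω

lemma m_le_QS (i : Fin n) (ω : Om n 𝒲 𝒳 𝒮 𝒴) : m μ ω ≤ QS μ i (ω.2.2.1 i) := by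
  unfold QS
  exact le_fw _ (m_nonneg μ hμ0) _ ω

lemma PSm_nonneg (s : Fin n → 𝒮) : 0 ≤ PSm μ s := fw_nonneg _ (m_nonneg μ hμ0) _ _

lemma QS_nonneg (i : Fin n) (c : 𝒮) : 0 ≤ QS μ i c := fw_nonneg _ (m_nonneg μ hμ0) _ _


lemma stepA (hμ1 : ∑ ω : Om n 𝒲 𝒳 𝒮 𝒴, m μ ω = 1) :
    ∑ ω : Om n 𝒲 𝒳 𝒮 𝒴, m μ ω *
        (Real.log (PSm μ ω.2.2.1) - Real.log (PSY μ (ω.2.2.1, ω.2.2.2))) ≤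
      ∑ ω : Om n 𝒲 𝒳 𝒮 𝒴, m μ ω *
        (∑ i : Fin n, (Real.log (QS μ i (ω.2.2.1 i))
          - Real.log (QYS μ i (ω.2.2.1 i, ω.2.2.2 i)))) := by
  set q : (Fin n → 𝒮) × (Fin n → 𝒴) → ℝ := fun v =>
    PSm μ v.1 * ∏ i : Fin n, (QYS μ i (v.1 i, v.2 i) / QS μ i (v.1 i)) with hqdef
  have hpos : ∀ v : (Fin n → 𝒮) × (Fin n → 𝒴), 0 < PSY μ v →
      (0 < PSm μ v.1 ∧ (∀ i : Fin n, 0 < QYS μ i (v.1 i, v.2 i)) ∧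
        (∀ i : Fin n, 0 < QS μ i (v.1 i))) := by
    intro v hv
    have hv' : 0 < fw (m μ) (fun ω : Om n 𝒲 𝒳 𝒮 𝒴 => (ω.2.2.1, ω.2.2.2)) v := hv
    obtain ⟨ω₀, hφ, hm₀⟩ := fw_pos_elim (m μ) (m_nonneg μ hμ0) hv'
    subst hφ
    refine ⟨lt_of_lt_of_le hm₀ (m_le_PSm μ hμ0 ω₀),
      fun i => lt_of_lt_of_le hm₀ (m_le_QYS μ hμ0 i ω₀),
      fun i => lt_of_lt_of_le hm₀ (m_le_QS μ hμ0 i ω₀)⟩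
  have hgibbs := gibbs (ι := (Fin n → 𝒮) × (Fin n → 𝒴)) (PSY μ) q
    (fun v => PSY_nonneg μ hμ0 v)
    (fun v => mul_nonneg (PSm_nonneg μ hμ0 _) (Finset.prod_nonneg fun i _ =>
      div_nonneg (QYS_nonneg μ hμ0 i _) (QS_nonneg μ hμ0 i _)))
    (fun v hv => by
      obtain ⟨h1, h2, h3⟩ := hpos v hv
      exact mul_pos h1 (Finset.prod_pos fun i _ => div_pos (h2 i) (h3 i)))
    ?hsum
  case hsum =>
    have hp : (∑ v : (Fin n → 𝒮) × (Fin n → 𝒴), PSY μ v) = 1 := by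
      rw [show (PSY μ : (Fin n → 𝒮) × (Fin n → 𝒴) → ℝ) =
        fw (m μ) (fun ω : Om n 𝒲 𝒳 𝒮 𝒴 => (ω.2.2.1, ω.2.2.2)) from rfl, sum_fw]
      exact hμ1
    rw [hp]
    have hq : ∀ s : Fin n → 𝒮,
        (∑ y : Fin n → 𝒴, q (s, y)) ≤ PSm μ s := by
      intro s
      rw [show (∑ y : Fin n → 𝒴, q (s, y)) =
          PSm μ s * ∑ y : Fin n → 𝒴, ∏ i : Fin n, (QYS μ i (s i, y i) / QS μ i (s i)) from by
        rw [Finset.mul_sum]]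
      have hprod : (∑ y : Fin n → 𝒴, ∏ i : Fin n, (QYS μ i (s i, y i) / QS μ i (s i))) ≤ 1 := by
        rw [show (∑ y : Fin n → 𝒴, ∏ i : Fin n, (QYS μ i (s i, y i) / QS μ i (s i))) =
            ∏ i : Fin n, ∑ b : 𝒴, (QYS μ i (s i, b) / QS μ i (s i)) from by
          rw [Finset.prod_univ_sum, Fintype.piFinset_univ]]
        refine Finset.prod_le_one (fun i _ => Finset.sum_nonneg fun b _ =>
          div_nonneg (QYS_nonneg μ hμ0 i _) (QS_nonneg μ hμ0 i _)) (fun i _ => ?_)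
        rw [← Finset.sum_div, sum_QYS]
        by_cases h0 : QS μ i (s i) = 0
        · rw [h0, div_zero]; norm_num
        · rw [div_self h0]
      calc PSm μ s * ∑ y : Fin n → 𝒴, ∏ i : Fin n, (QYS μ i (s i, y i) / QS μ i (s i))
          ≤ PSm μ s * 1 := mul_le_mul_of_nonneg_left hprod (PSm_nonneg μ hμ0 s)
        _ = PSm μ s := mul_one _
    calc (∑ v : (Fin n → 𝒮) × (Fin n → 𝒴), q v)
        = ∑ s : Fin n → 𝒮, ∑ y : Fin n → 𝒴, q (s, y) := Fintype.sum_prod_type q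
      _ ≤ ∑ s : Fin n → 𝒮, PSm μ s := Finset.sum_le_sum fun s _ => hq s
      _ = 1 := by
          rw [show (PSm μ : (Fin n → 𝒮) → ℝ) =
            fw (m μ) (fun ω : Om n 𝒲 𝒳 𝒮 𝒴 => ω.2.2.1) from rfl, sum_fw]
          exact hμ1
  -- rewrite the gibbs inequality into the goal
  have hkey : ∑ ω : Om n 𝒲 𝒳 𝒮 𝒴, m μ ω *
      ((Real.log (PSm μ ω.2.2.1) - Real.log (PSY μ (ω.2.2.1, ω.2.2.2)))
        - ∑ i : Fin n, (Real.log (QS μ i (ω.2.2.1 i))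
            - Real.log (QYS μ i (ω.2.2.1 i, ω.2.2.2 i)))) ≤ 0 := by
    have hfs : ∑ ω : Om n 𝒲 𝒳 𝒮 𝒴, m μ ω *
        ((Real.log (PSm μ ω.2.2.1) - Real.log (PSY μ (ω.2.2.1, ω.2.2.2)))
          - ∑ i : Fin n, (Real.log (QS μ i (ω.2.2.1 i))
              - Real.log (QYS μ i (ω.2.2.1 i, ω.2.2.2 i)))) =
        ∑ v : (Fin n → 𝒮) × (Fin n → 𝒴), PSY μ v *
          ((Real.log (PSm μ v.1) - Real.log (PSY μ v))
            - ∑ i : Fin n, (Real.log (QS μ i (v.1 i))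
                - Real.log (QYS μ i (v.1 i, v.2 i)))) := by
      exact (sum_fw_mul (m μ) (fun ω : Om n 𝒲 𝒳 𝒮 𝒴 => (ω.2.2.1, ω.2.2.2))
        (fun v => (Real.log (PSm μ v.1) - Real.log (PSY μ v))
            - ∑ i : Fin n, (Real.log (QS μ i (v.1 i))
                - Real.log (QYS μ i (v.1 i, v.2 i))))).symm
    rw [hfs]
    refine le_trans (le_of_eq ?_) hgibbs
    refine Finset.sum_congr rfl fun v _ => ?_
    rcases eq_or_lt_of_le (PSY_nonneg μ hμ0 v) with h0 | h0
    · rw [← h0]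
      ring
    · obtain ⟨h1, h2, h3⟩ := hpos v h0
      have hfact : ∀ i : Fin n, QYS μ i (v.1 i, v.2 i) / QS μ i (v.1 i) ≠ 0 :=
        fun i => (div_pos (h2 i) (h3 i)).ne'
      have hlogq : Real.log (q v) = Real.log (PSm μ v.1) +
          ∑ i : Fin n, (Real.log (QYS μ i (v.1 i, v.2 i)) - Real.log (QS μ i (v.1 i))) := by
        rw [hqdef]
        dsimp only
        rw [Real.log_mul h1.ne' (Finset.prod_ne_zero_iff.mpr fun i _ => hfact i),
          Real.log_prod fun i _ => hfact i]
        congr 1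
        exact Finset.sum_congr rfl fun i _ => Real.log_div (h2 i).ne' (h3 i).ne'
      rw [hlogq]
      have hsplit : (∑ i : Fin n, (Real.log (QYS μ i (v.1 i, v.2 i))
            - Real.log (QS μ i (v.1 i)))) =
          - ∑ i : Fin n, (Real.log (QS μ i (v.1 i)) - Real.log (QYS μ i (v.1 i, v.2 i))) := by
        rw [← Finset.sum_neg_distrib]
        exact Finset.sum_congr rfl fun i _ => by ring
      rw [hsplit]
      ring
  simp only [mul_sub, Finset.sum_sub_distrib] at hkey ⊢
  linarith

end stepB
end SL

/-- Single-letterization inequality: for `(W, X^n, S^n, Y^n)` with `S^n` i.i.d.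
`~ P_S` and independent of `W`, and with the memoryless-channel Markov chains
`(W, Y^{i−1}, S_{≠i}) − (X_i, S_i) − Y_i` for each `i`, one has
`I(W; Y^n | S^n) ≤ Σ_{i=1}^n I(X_i; Y_i | S_i)`. -/
theorem single_letterization {n : ℕ} {𝒲 𝒳 𝒮 𝒴 : Type}
    [Fintype 𝒲] [Fintype 𝒳] [Fintype 𝒮] [Fintype 𝒴]
    [DecidableEq 𝒳] [DecidableEq 𝒮] [DecidableEq 𝒴]
    [Nonempty 𝒲] [Nonempty 𝒳] [Nonempty 𝒮] [Nonempty 𝒴]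
    (μ : 𝒲 → (Fin n → 𝒳) → (Fin n → 𝒮) → (Fin n → 𝒴) → ℝ)
    (hμ0 : ∀ w x s y, 0 ≤ μ w x s y)
    (hμ1 : ∑ w, ∑ x, ∑ s, ∑ y, μ w x s y = 1)
    (PW : 𝒲 → ℝ) (PS : 𝒮 → ℝ)
    (hPW0 : ∀ w, 0 ≤ PW w) (hPW1 : ∑ w, PW w = 1)
    (hPS0 : ∀ s, 0 ≤ PS s) (hPS1 : ∑ s, PS s = 1)
    -- `S^n` is i.i.d. `~ P_S` and independent of `W`:
    (hiid : ∀ w s, (∑ x, ∑ y, μ w x s y) = PW w * ∏ i, PS (s i))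
    -- Markov chain `(W, Y^{<i}, S_{≠i}) − (X_i, S_i) − Y_i` for each `i`:
    (hMarkov : ∀ (i : Fin n) (w : 𝒲) (s : Fin n → 𝒮) (yp : Fin n → 𝒴) (xi : 𝒳) (yi : 𝒴),
      (∑ x, ∑ y, if x i = xi ∧ y i = yi ∧ (∀ j : Fin n, (j : ℕ) < (i : ℕ) → y j = yp j)
          then μ w x s y else 0) *
        (∑ w', ∑ x, ∑ s', ∑ y, if x i = xi ∧ s' i = s i then μ w' x s' y else 0) =
      (∑ x, ∑ y, if x i = xi ∧ (∀ j : Fin n, (j : ℕ) < (i : ℕ) → y j = yp j)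
          then μ w x s y else 0) *
        (∑ w', ∑ x, ∑ s', ∑ y, if x i = xi ∧ s' i = s i ∧ y i = yi
          then μ w' x s' y else 0)) :
    cmi3 (fun w y s => ∑ x, μ w x s y) ≤
      ∑ i : Fin n, cmi3 (fun (xi : 𝒳) (yi : 𝒴) (si : 𝒮) =>
        ∑ w, ∑ x, ∑ s, ∑ y,
          if x i = xi ∧ y i = yi ∧ s i = si then μ w x s y else 0) := by
  classical
  letI : DecidableEq 𝒲 := Classical.decEq 𝒲
  obtain ⟨y₀⟩ := (inferInstance : Nonempty 𝒴)
  have hm1 : ∑ ω : SL.Om n 𝒲 𝒳 𝒮 𝒴, SL.m μ ω = 1 := by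
    rw [show (∑ ω : SL.Om n 𝒲 𝒳 𝒮 𝒴, SL.m μ ω)
        = ∑ w, ∑ x, ∑ s, ∑ y, μ w x s y from by
      simp only [SL.m, Fintype.sum_prod_type]]
    exact hμ1
  rw [SL.lhs_expand μ hμ0]
  calc ∑ ω : SL.Om n 𝒲 𝒳 𝒮 𝒴, SL.m μ ω *
        (Real.log (SL.PT μ ((ω.1, ω.2.2.1), ω.2.2.2)) + Real.log (SL.PSm μ ω.2.2.1)
          - Real.log (SL.PWS μ (ω.1, ω.2.2.1)) - Real.log (SL.PSY μ (ω.2.2.1, ω.2.2.2)))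
      = ∑ ω : SL.Om n 𝒲 𝒳 𝒮 𝒴,
          (SL.m μ ω * (∑ i : Fin n, (Real.log (SL.gg μ y₀ ((i : ℕ) + 1) ω)
              - Real.log (SL.gg μ y₀ i ω)))
            + SL.m μ ω * (Real.log (SL.PSm μ ω.2.2.1)
              - Real.log (SL.PSY μ (ω.2.2.1, ω.2.2.2)))) := by
        refine Finset.sum_congr rfl fun ω _ => ?_
        rw [← SL.telescope μ y₀ ω]
        ring
    _ = (∑ ω : SL.Om n 𝒲 𝒳 𝒮 𝒴, SL.m μ ω *
          (∑ i : Fin n, (Real.log (SL.gg μ y₀ ((i : ℕ) + 1) ω) - Real.log (SL.gg μ y₀ i ω))))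
        + ∑ ω : SL.Om n 𝒲 𝒳 𝒮 𝒴, SL.m μ ω *
          (Real.log (SL.PSm μ ω.2.2.1) - Real.log (SL.PSY μ (ω.2.2.1, ω.2.2.2))) :=
        Finset.sum_add_distrib
    _ ≤ (∑ ω : SL.Om n 𝒲 𝒳 𝒮 𝒴, SL.m μ ω *
          (∑ i : Fin n, (Real.log (SL.gg μ y₀ ((i : ℕ) + 1) ω) - Real.log (SL.gg μ y₀ i ω))))
        + ∑ ω : SL.Om n 𝒲 𝒳 𝒮 𝒴, SL.m μ ω *
          (∑ i : Fin n, (Real.log (SL.QS μ i (ω.2.2.1 i))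
            - Real.log (SL.QYS μ i (ω.2.2.1 i, ω.2.2.2 i)))) := by
        have := SL.stepA μ hμ0 hm1
        linarith
    _ = (∑ i : Fin n, ∑ ω : SL.Om n 𝒲 𝒳 𝒮 𝒴, SL.m μ ω *
          (Real.log (SL.gg μ y₀ ((i : ℕ) + 1) ω) - Real.log (SL.gg μ y₀ i ω)))
        + ∑ i : Fin n, ∑ ω : SL.Om n 𝒲 𝒳 𝒮 𝒴, SL.m μ ω *
          (Real.log (SL.QS μ i (ω.2.2.1 i))
            - Real.log (SL.QYS μ i (ω.2.2.1 i, ω.2.2.2 i))) := by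
        congr 1
        · rw [Finset.sum_congr rfl fun (ω : SL.Om n 𝒲 𝒳 𝒮 𝒴) _ => Finset.mul_sum
            (a := SL.m μ ω) .. ]
          exact Finset.sum_comm
        · rw [Finset.sum_congr rfl fun (ω : SL.Om n 𝒲 𝒳 𝒮 𝒴) _ => Finset.mul_sum
            (a := SL.m μ ω) .. ]
          exact Finset.sum_comm
    _ ≤ (∑ i : Fin n, ∑ ω : SL.Om n 𝒲 𝒳 𝒮 𝒴, SL.m μ ω *
          (Real.log (SL.Rf μ i ((ω.2.1 i, ω.2.2.1 i), ω.2.2.2 i))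
            - Real.log (SL.Rx μ i (ω.2.1 i, ω.2.2.1 i))))
        + ∑ i : Fin n, ∑ ω : SL.Om n 𝒲 𝒳 𝒮 𝒴, SL.m μ ω *
          (Real.log (SL.QS μ i (ω.2.2.1 i))
            - Real.log (SL.QYS μ i (ω.2.2.1 i, ω.2.2.2 i))) := by
        have := Finset.sum_le_sum (s := (Finset.univ : Finset (Fin n)))
          (fun i _ => SL.stepB μ y₀ hμ0 i (hMarkov i))
        linarith
    _ = ∑ i : Fin n, cmi3 (fun (xi : 𝒳) (yi : 𝒴) (si : 𝒮) =>
        ∑ w, ∑ x, ∑ s, ∑ y,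
          if x i = xi ∧ y i = yi ∧ s i = si then μ w x s y else 0) := by
        rw [← Finset.sum_add_distrib]
        refine Finset.sum_congr rfl fun i _ => ?_
        rw [SL.rhs_expand μ hμ0 i, ← Finset.sum_add_distrib]
        refine Finset.sum_congr rfl fun ω _ => ?_
        ring
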